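/- arXiv:1906.02388 — 2 statements merged into one kernel-verified Lean document; each statement's English description precedes it below -/
import Mathlib

section
/- Let n ≥ 2, 0 < α, β < 2, λ ∈ ℝ, and let Ω be an unbounded open subset of Σ_λ. Let U ∈ L_α ∩ C^{1,1}_loc(Ω) and V ∈ L_β ∩ C^{1,1}_loc(Ω) be lower semi-continuous on the closure of Ω, anti-symmetric about T_λ (U(x^λ) = -U(x), V(x^λ) = -V(x) for all x), and suppose: (-Δ)^{α/2}U(x) + C₂(x)U(x) + C₃(x)V(x) ≥ 0 and (-Δ)^{β/2}V(x) + C₁(x)U(x) ≥ 0 for all x ∈ Ω; U(x) ≥ 0 and V(x) ≥ 0 on Σ_λ ∖ Ω; C₁(x) < 0, C₃(x) < 0, C₂(x) > 0 on Ω; there exist m > β and constants c, c' > 0 such that c/|x|^m ≤ -C₁(x) ≤ c'/|x|^m for |x| sufficiently large; and C₃(x) → 0 as |x| → ∞. Then there exists R₀ > 0 such that: if U attains its minimum over Ω at a point x⁰ with U(x⁰) < 0 and V attains its minimum over Ω at a point x¹ with V(x¹) < 0, then |x⁰| ≤ R₀ or |x¹| ≤ R₀. -/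
/-!
Let `x¹` be a negative minimum point of `V`, so by the exterior condition `V(x¹) ≤ V` on all of
`Σ_λ`. Antisymmetry folds the principal-value integral for `(-Δ)^{β/2} V(x¹)` onto `Σ_λ`: the part
over `Σ_λᶜ` becomes `∫_{Σ_λ} (V(x¹) + V(z)) / |x¹^λ - z|^{n+β}`, and on `Σ_λ` the kernel
`|x¹ - z|^{-n-β}` may be replaced by the smaller `|x¹^λ - z|^{-n-β}` because `V(x¹) - V(z) ≤ 0`.
Hence `(-Δ)^{β/2} V(x¹) ≤ 2 C_{n,β} V(x¹) ∫_{Σ_λ} |x¹^λ - z|^{-n-β} dz ≤ -κ |V(x¹)| / |x¹|^β`,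
the last integral being bounded below on a ball of radius `|x¹|` in `Σ_λ` that stays within
`7 |x¹|` of `x¹^λ`. The second inequality and `U(x¹) ≥ U(x⁰)` give instead
`(-Δ)^{β/2} V(x¹) ≥ -c' |U(x⁰)| / |x¹|^m`, and since `m > β` the two bounds are incompatible
once `|x¹|` is large.
-/

open MeasureTheory Filter Metric Set Bornology

noncomputable section

/-- The space `ℝⁿ`. -/
abbrev En (n : ℕ) := EuclideanSpace ℝ (Fin n)

/-- Membership in the weighted space `L_σ`. -/
def MemL (n : ℕ) (σ : ℝ) (w : En n → ℝ) : Prop :=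
  LocallyIntegrable w volume ∧
    Integrable (fun x : En n => |w x| / (1 + ‖x‖ ^ ((n : ℝ) + σ))) volume

/-- `C^{1,1}_loc` on an open set `Ω`: near every point of `Ω`, `w` is
differentiable with Lipschitz-continuous derivative. -/
def C11locOn (n : ℕ) (Ω : Set (En n)) (w : En n → ℝ) : Prop :=
  ∀ x ∈ Ω, ∃ ε > 0, ∃ K : NNReal, ball x ε ⊆ Ω ∧
    (∀ y ∈ ball x ε, DifferentiableAt ℝ w y) ∧
    LipschitzOnWith K (fderiv ℝ w) (ball x ε)

/-- `C^{1,1}_loc` on all of `ℝⁿ`. -/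
def C11loc (n : ℕ) (w : En n → ℝ) : Prop := C11locOn n univ w

/-- `HasFracLap n σ c w x L` : the fractional Laplacian `(-Δ)^{σ/2} w`, with
normalization constant `c = C_{n,σ} > 0`, exists at `x` as a principal value
and is equal to `L`. -/
def HasFracLap (n : ℕ) (σ c : ℝ) (w : En n → ℝ) (x : En n) (L : ℝ) : Prop :=
  Tendsto
    (fun ε : ℝ => c * ∫ y in {y : En n | ε ≤ dist x y},
        (w x - w y) / dist x y ^ ((n : ℝ) + σ))
    (nhdsWithin 0 (Ioi 0)) (nhds L)

/-- Reflection `x ↦ x^λ` about the hyperplane `T_λ = {x : x₁ = λ}`. -/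
def reflPt (n : ℕ) [NeZero n] (l : ℝ) (x : En n) : En n :=
  WithLp.toLp 2 (fun i => if i = 0 then 2 * l - x 0 else x i)

/-- The half space `Σ_λ = {x : x₁ < λ}`. -/
def halfSpace (n : ℕ) [NeZero n] (l : ℝ) : Set (En n) := {x | x 0 < l}

open Topology

section Reflection

variable {n : ℕ} [NeZero n] {l : ℝ}

@[simp]
lemma reflPt_apply_zero (x : En n) : reflPt n l x 0 = 2 * l - x 0 := by
  simp [reflPt]

lemma reflPt_apply_of_ne (x : En n) {i : Fin n} (hi : i ≠ 0) : reflPt n l x i = x i := by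
  simp [reflPt, hi]

lemma measurableSet_halfSpace : MeasurableSet (halfSpace n l) :=
  (isOpen_lt (by fun_prop) continuous_const).measurableSet

lemma reflPt_involutive : Function.Involutive (reflPt n l) := by
  intro x
  ext i
  by_cases hi : i = 0
  · subst hi; simp
  · simp [reflPt_apply_of_ne _ hi]

lemma dist_reflPt_reflPt (x y : En n) : dist (reflPt n l x) (reflPt n l y) = dist x y := by
  simp only [EuclideanSpace.dist_eq]
  congr 1
  refine Finset.sum_congr rfl fun i _ => ?_
  by_cases hi : i = 0
  · subst hi
    rw [reflPt_apply_zero, reflPt_apply_zero, Real.dist_eq, Real.dist_eq,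
      show 2 * l - x 0 - (2 * l - y 0) = -(x 0 - y 0) by ring, abs_neg]
  · simp only [reflPt_apply_of_ne _ hi]

lemma dist_reflPt_right (x z : En n) : dist x (reflPt n l z) = dist (reflPt n l x) z := by
  rw [← dist_reflPt_reflPt, reflPt_involutive]

lemma dist_le_dist_reflPt {x z : En n} (hx : x 0 ≤ l) (hz : z 0 ≤ l) :
    dist x z ≤ dist (reflPt n l x) z := by
  simp only [EuclideanSpace.dist_eq]
  gcongr with i
  by_cases hi : i = 0
  · subst hi
    simp only [reflPt_apply_zero, Real.dist_eq]
    exact abs_le_abs (by linarith) (by linarith)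
  · simp only [reflPt_apply_of_ne _ hi, le_refl]

lemma sub_add_sub_le_dist_reflPt (x z : En n) :
    (l - x 0) + (l - z 0) ≤ dist (reflPt n l x) z := by
  have h := PiLp.dist_apply_le (reflPt n l x) z 0
  rw [reflPt_apply_zero, Real.dist_eq] at h
  linarith [le_abs_self (2 * l - x 0 - z 0)]

lemma dist_reflPt_self (x : En n) : dist (reflPt n l x) x = 2 * |l - x 0| := by
  rw [EuclideanSpace.dist_eq, Finset.sum_eq_single (0 : Fin n)]
  · rw [reflPt_apply_zero, Real.dist_eq, Real.sqrt_sq_eq_abs, abs_abs,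
      show 2 * l - x 0 - x 0 = 2 * (l - x 0) by ring, abs_mul, abs_two]
  · intro i _ hi
    simp [reflPt_apply_of_ne _ hi]
  · simp

lemma measurePreserving_reflPt : MeasurePreserving (reflPt n l) volume volume := by
  let f : Fin n → ℝ → ℝ := fun i => if i = 0 then (2 * l - ·) else id
  have hf : ∀ i, MeasurePreserving (f i) volume volume := fun i => by
    by_cases hi : i = 0
    · simpa [f, hi] using Measure.measurePreserving_sub_left volume (2 * l)
    · simpa [f, hi] using MeasurePreserving.id volume
  have hrefl : reflPt n l = WithLp.toLp 2 ∘ (fun y i => f i (y i)) ∘ WithLp.ofLp := by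
    funext x
    ext i
    by_cases hi : i = 0
    · subst hi; simp [f]
    · simp [f, hi, reflPt_apply_of_ne _ hi]
  rw [hrefl]
  exact (PiLp.volume_preserving_toLp _).comp
    ((measurePreserving_pi _ _ hf).comp (PiLp.volume_preserving_ofLp _))

lemma ae_apply_zero_ne (l : ℝ) : ∀ᵐ z : En n, z 0 ≠ l :=
  (PiLp.volume_preserving_ofLp (Fin n)).quasiMeasurePreserving.ae
    (Measure.ae_eval_ne (fun _ => volume) 0 l)

lemma setIntegral_compl_halfSpace (f : En n → ℝ) :
    ∫ y in (halfSpace n l)ᶜ, f y = ∫ z in halfSpace n l, f (reflPt n l z) := by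
  have hemb : MeasurableEmbedding (reflPt n l) :=
    (MeasurableEquiv.ofInvolutive _ reflPt_involutive
      measurePreserving_reflPt.measurable).measurableEmbedding
  rw [← measurePreserving_reflPt.setIntegral_preimage_emb hemb]
  refine setIntegral_congr_set (eventuallyEq_set.2 ?_)
  filter_upwards [ae_apply_zero_ne l] with z hz
  simp only [halfSpace, mem_preimage, mem_compl_iff, mem_ofPred_eq, reflPt_apply_zero]
  constructor <;> intro h <;> [exact lt_of_le_of_ne (by linarith) hz; linarith]

end Reflection

section WeightedSpace

variable {n : ℕ} {σ : ℝ}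

lemma integrable_inv_one_add_norm_rpow {t : ℝ} (ht : (n : ℝ) < t) :
    Integrable (fun z : En n => (1 + ‖z‖ ^ t)⁻¹) := by
  have ht0 : 0 ≤ t := (Nat.cast_nonneg n).trans ht.le
  have hbase := integrable_one_add_norm (E := En n) (μ := volume)
    (by rwa [finrank_euclideanSpace_fin])
  refine (hbase.const_mul (2 ^ t)).mono' (by fun_prop) (Eventually.of_forall fun z => ?_)
  -- `1 + ‖z‖ ≤ 2 max 1 ‖z‖` and `max 1 ‖z‖ ^ t ≤ 1 + ‖z‖ ^ t`
  have hpow : (1 + ‖z‖) ^ t ≤ 2 ^ t * (1 + ‖z‖ ^ t) := by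
    rcases le_total 1 ‖z‖ with h | h
    · calc (1 + ‖z‖) ^ t ≤ (2 * ‖z‖) ^ t := by gcongr; linarith
        _ ≤ 2 ^ t * (1 + ‖z‖ ^ t) := by
          rw [Real.mul_rpow zero_le_two (norm_nonneg z)]; gcongr; linarith
    · calc (1 + ‖z‖) ^ t ≤ 2 ^ t := by gcongr; linarith
        _ ≤ 2 ^ t * (1 + ‖z‖ ^ t) := by
          have := Real.rpow_nonneg (norm_nonneg z) t
          nlinarith [Real.rpow_nonneg zero_le_two t]
  rw [Real.norm_eq_abs, abs_of_pos (by positivity), Real.rpow_neg (by positivity),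
    ← div_eq_mul_inv, le_div_iff₀ (by positivity), inv_mul_eq_div,
    div_le_iff₀ (by positivity)]
  linarith

lemma memL_const (hσ : 0 < σ) (a : ℝ) : MemL n σ (fun _ => a) := by
  refine ⟨locallyIntegrable_const a, ?_⟩
  simpa only [div_eq_mul_inv] using
    (integrable_inv_one_add_norm_rpow (n := n) (by linarith : (n : ℝ) < n + σ)).const_mul |a|

lemma MemL.add {f g : En n → ℝ} (hf : MemL n σ f) (hg : MemL n σ g) :
    MemL n σ (fun z => f z + g z) := by
  refine ⟨hf.1.add hg.1, (hf.2.add hg.2).mono' ?_ (Eventually.of_forall fun z => ?_)⟩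
  · exact (hf.1.add hg.1).aestronglyMeasurable.norm.div₀
      (Measurable.aestronglyMeasurable (by fun_prop))
  · simp only [Pi.add_apply, Real.norm_eq_abs, abs_div, abs_abs]
    rw [abs_of_pos (add_pos_of_pos_of_nonneg one_pos (Real.rpow_nonneg (norm_nonneg z) _)),
      ← add_div]
    gcongr
    exact abs_add_le _ _

lemma MemL.neg {f : En n → ℝ} (hf : MemL n σ f) : MemL n σ (fun z => -f z) := by
  simpa only [MemL, abs_neg] using ⟨hf.1.neg, hf.2⟩

lemma MemL.sub {f g : En n → ℝ} (hf : MemL n σ f) (hg : MemL n σ g) :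
    MemL n σ (fun z => f z - g z) := by
  simpa only [sub_eq_add_neg] using hf.add hg.neg

lemma one_add_norm_rpow_le_mul_dist_rpow {t d : ℝ} (ht : 0 ≤ t) (hd : 0 < d) {p z : En n}
    (hz : d ≤ dist p z) :
    1 + ‖z‖ ^ t ≤ ((1 / d) ^ t + (‖p‖ / d + 1) ^ t) * dist p z ^ t := by
  have hD : 0 < dist p z := hd.trans_le hz
  have h1 : 1 ≤ (1 / d) ^ t * dist p z ^ t := by
    rw [← Real.mul_rpow (by positivity) hD.le]
    exact Real.one_le_rpow (by rw [one_div_mul_eq_div, one_le_div hd]; exact hz) ht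
  have h2 : ‖z‖ ^ t ≤ (‖p‖ / d + 1) ^ t * dist p z ^ t := by
    rw [← Real.mul_rpow (by positivity) hD.le]
    gcongr
    have hzp : ‖z‖ ≤ ‖p‖ + dist p z := by
      simpa [dist_eq_norm, norm_sub_rev] using norm_le_norm_add_norm_sub' z p
    have : ‖p‖ ≤ ‖p‖ / d * dist p z := by
      rw [div_mul_eq_mul_div, le_div_iff₀ hd]; gcongr
    linarith
  linarith

lemma MemL.integrableOn_div_dist_rpow {w : En n → ℝ} (hw : MemL n σ w) (hσ : 0 < σ)
    (p : En n) {d : ℝ} (hd : 0 < d) :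
    IntegrableOn (fun z => w z / dist p z ^ ((n : ℝ) + σ)) {z | d ≤ dist p z} := by
  set t : ℝ := (n : ℝ) + σ
  have ht : 0 ≤ t := by positivity
  set K : ℝ := (1 / d) ^ t + (‖p‖ / d + 1) ^ t
  refine (hw.2.const_mul K).integrableOn.mono' ?_ ?_
  · exact (hw.1.aestronglyMeasurable.div₀ (by fun_prop)).restrict
  · refine (ae_restrict_iff' (isClosed_le continuous_const (by fun_prop)).measurableSet).2
      (Eventually.of_forall fun z hz => ?_)
    have hD : 0 < dist p z ^ t := Real.rpow_pos_of_pos (hd.trans_le hz) t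
    rw [Real.norm_eq_abs, abs_div, abs_of_pos hD, mul_div_assoc', div_le_div_iff₀ hD
      (by positivity), mul_comm K, mul_assoc]
    gcongr
    exact one_add_norm_rpow_le_mul_dist_rpow ht hd hz

end WeightedSpace

section Kernel

variable {n : ℕ} [NeZero n] {l σ : ℝ}

lemma MemL.integrableOn_halfSpace_div_dist_reflPt_rpow {w : En n → ℝ} (hw : MemL n σ w)
    (hσ : 0 < σ) {x : En n} (hx : x ∈ halfSpace n l) :
    IntegrableOn (fun z => w z / dist (reflPt n l x) z ^ ((n : ℝ) + σ)) (halfSpace n l) :=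
  (hw.integrableOn_div_dist_rpow hσ _ (sub_pos.2 hx)).mono_set fun z (hz : z 0 < l) => by
    show l - x 0 ≤ _
    linarith [sub_add_sub_le_dist_reflPt (l := l) x z]

lemma norm_pos_of_mem_halfSpace {x : En n} (hx : x ∈ halfSpace n l) (hl : |l| ≤ ‖x‖) :
    0 < ‖x‖ := by
  have hx0 : x 0 < l := hx
  have hx0r : |x 0| ≤ ‖x‖ := PiLp.norm_apply_le x 0
  linarith [le_abs_self l, neg_abs_le (x 0)]

lemma le_integral_halfSpace_one_div_dist_reflPt_rpow (hσ : 0 < σ) {x : En n}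
    (hx : x ∈ halfSpace n l) (hl : |l| ≤ ‖x‖) :
    (volume (ball (0 : En n) 1)).toReal / 7 ^ ((n : ℝ) + σ) * ‖x‖ ^ (-σ) ≤
      ∫ z in halfSpace n l, 1 / dist (reflPt n l x) z ^ ((n : ℝ) + σ) := by
  set t : ℝ := (n : ℝ) + σ
  set r := ‖x‖
  have hx0 : x 0 < l := hx
  have hx0r : |x 0| ≤ r := PiLp.norm_apply_le x 0
  have hr : 0 < r := norm_pos_of_mem_halfSpace hx hl
  -- a ball of radius `r` inside `Σ_λ`, all of whose points lie within `7 r` of `x^λ`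
  set q : En n := x - (2 * r) • EuclideanSpace.single 0 1
  have hxq : dist x q = 2 * r := by
    simp [q, norm_smul, abs_of_pos hr]
  have hball : ball q r ⊆ halfSpace n l := fun z hz => by
    have h := (PiLp.dist_apply_le z q 0).trans_lt (mem_ball.1 hz)
    rw [Real.dist_eq] at h
    have hq0 : q 0 = x 0 - 2 * r := by simp [q]
    show z 0 < l
    linarith [le_abs_self (z 0 - q 0)]
  have hkernel : ∀ z ∈ ball q r, 1 / (7 * r) ^ t ≤ 1 / dist (reflPt n l x) z ^ t := by
    intro z hz
    have hpos : 0 < dist (reflPt n l x) z := by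
      have : z 0 < l := hball hz
      linarith [sub_add_sub_le_dist_reflPt (l := l) x z]
    have hfar : dist (reflPt n l x) z ≤ 7 * r := by
      have h1 := dist_triangle4 (reflPt n l x) x q z
      rw [dist_reflPt_self, hxq] at h1
      have h2 : |l - x 0| ≤ 2 * r := by
        linarith [abs_sub l (x 0)]
      linarith [mem_ball'.1 hz]
    gcongr
  have hint := (memL_const (n := n) hσ 1).integrableOn_halfSpace_div_dist_reflPt_rpow hσ hx
  calc (volume (ball (0 : En n) 1)).toReal / 7 ^ t * r ^ (-σ)
      = volume.real (ball q r) * (1 / (7 * r) ^ t) := by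
        rw [measureReal_def, Measure.addHaar_ball _ _ hr.le, finrank_euclideanSpace_fin,
          ENNReal.toReal_mul, ENNReal.toReal_ofReal (by positivity),
          Real.mul_rpow (by norm_num) hr.le, ← Real.rpow_natCast, Real.rpow_neg hr.le]
        have : r ^ t = r ^ (n : ℝ) * r ^ σ := Real.rpow_add hr _ _
        rw [this]
        field_simp
    _ ≤ ∫ z in ball q r, 1 / dist (reflPt n l x) z ^ t := by
        rw [← smul_eq_mul, ← setIntegral_const]
        exact setIntegral_mono_on (integrableOn_const measure_ball_lt_top.ne)
          (hint.mono_set hball) measurableSet_ball hkernel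
    _ ≤ ∫ z in halfSpace n l, 1 / dist (reflPt n l x) z ^ t :=
        setIntegral_mono_set hint (Eventually.of_forall fun z => by positivity)
          hball.eventuallyLE

end Kernel

section FracLapAtMinimum

variable {n : ℕ} [NeZero n] {l σ : ℝ} {w : En n → ℝ}

lemma integral_truncation_le_of_isMinOn (hw : MemL n σ w) (hσ : 0 < σ)
    (hanti : ∀ x, w (reflPt n l x) = -w x) {x : En n} (hmin : IsMinOn w (halfSpace n l) x)
    {ε : ℝ} (hε : 0 < ε) (hεx : ε < l - x 0) :
    ∫ y in {y | ε ≤ dist x y}, (w x - w y) / dist x y ^ ((n : ℝ) + σ) ≤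
      (∫ z in halfSpace n l \ ball x ε, (w x - w z) / dist (reflPt n l x) z ^ ((n : ℝ) + σ)) +
        ∫ z in halfSpace n l, (w x + w z) / dist (reflPt n l x) z ^ ((n : ℝ) + σ) := by
  set t : ℝ := (n : ℝ) + σ
  set A : Set (En n) := {y | ε ≤ dist x y}
  have hx : x ∈ halfSpace n l := show x 0 < l by linarith
  have hcompl : (halfSpace n l)ᶜ ⊆ A := fun z (hz : ¬ z 0 < l) => by
    have h := PiLp.dist_apply_le x z 0
    rw [Real.dist_eq, abs_sub_comm] at h
    show ε ≤ dist x z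
    linarith [le_abs_self (z 0 - x 0)]
  have hinter : A ∩ halfSpace n l = halfSpace n l \ ball x ε := by
    ext z
    simp [A, dist_comm, and_comm]
  have hg1 := ((memL_const hσ (w x)).sub hw).integrableOn_div_dist_rpow hσ x hε
  -- `Σ_λᶜ` lies outside the `ε`-ball; reflecting it onto `Σ_λ` turns `w x - w y` into `w x + w z`
  have hfar : ∫ y in A \ halfSpace n l, (w x - w y) / dist x y ^ t =
      ∫ z in halfSpace n l, (w x + w z) / dist (reflPt n l x) z ^ t := by
    rw [sdiff_eq, inter_eq_right.2 hcompl, setIntegral_compl_halfSpace]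
    simp only [hanti, dist_reflPt_right, sub_neg_eq_add]
  have hnear : ∫ y in A ∩ halfSpace n l, (w x - w y) / dist x y ^ t ≤
      ∫ z in halfSpace n l \ ball x ε, (w x - w z) / dist (reflPt n l x) z ^ t := by
    rw [hinter]
    refine setIntegral_mono_on (hg1.mono_set (hinter ▸ inter_subset_left))
      ((((memL_const hσ (w x)).sub hw).integrableOn_halfSpace_div_dist_reflPt_rpow hσ hx).mono_set
        sdiff_subset) (measurableSet_halfSpace.diff measurableSet_ball) ?_
    rintro z ⟨hz, hzε⟩
    have hpos : 0 < dist x z ^ t :=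
      Real.rpow_pos_of_pos (hε.trans_le (by simpa [dist_comm] using hzε)) t
    have h := div_le_div_of_nonneg_left (sub_nonneg.2 (hmin hz)) hpos
      (Real.rpow_le_rpow dist_nonneg (dist_le_dist_reflPt hx.le hz.le) (by positivity))
    rw [← neg_sub (w z) (w x), neg_div, neg_div]
    exact neg_le_neg h
  rw [← integral_inter_add_sdiff measurableSet_halfSpace hg1, hfar]
  linarith

lemma HasFracLap.le_of_isMinOn_halfSpace {c L : ℝ} (hσ : 0 < σ) (hc : 0 ≤ c) (hw : MemL n σ w)
    (hanti : ∀ x, w (reflPt n l x) = -w x) {x : En n} (hx : x ∈ halfSpace n l)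
    (hmin : IsMinOn w (halfSpace n l) x) (hL : HasFracLap n σ c w x L) :
    L ≤ 2 * c * w x * ∫ z in halfSpace n l, 1 / dist (reflPt n l x) z ^ ((n : ℝ) + σ) := by
  set t : ℝ := (n : ℝ) + σ
  set S := halfSpace n l
  set g₂ : En n → ℝ := fun z => (w x - w z) / dist (reflPt n l x) z ^ t
  set g₃ : En n → ℝ := fun z => (w x + w z) / dist (reflPt n l x) z ^ t
  have hg₂ : IntegrableOn g₂ S :=
    ((memL_const hσ (w x)).sub hw).integrableOn_halfSpace_div_dist_reflPt_rpow hσ hx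
  have hg₃ : IntegrableOn g₃ S :=
    ((memL_const hσ (w x)).add hw).integrableOn_halfSpace_div_dist_reflPt_rpow hσ hx
  have hsum : (∫ z in S, g₂ z) + ∫ z in S, g₃ z =
      2 * w x * ∫ z in S, 1 / dist (reflPt n l x) z ^ t := by
    rw [← integral_add hg₂ hg₃, ← integral_const_mul]
    congr 1 with z
    simp only [g₂, g₃]
    ring
  have hsmall : Tendsto (fun ε => volume.restrict S (ball x ε)) (𝓝[>] 0) (𝓝 0) := by
    simpa only [thickening_singleton, measure_singleton] using
      tendsto_measure_thickening_of_isClosed (μ := volume.restrict S)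
        ⟨1, one_pos, by simpa only [thickening_singleton] using
          ((Measure.restrict_apply_le _ _).trans_lt measure_ball_lt_top).ne⟩ isClosed_singleton
  have hnear : Tendsto (fun ε => ∫ z in ball x ε ∩ S, g₂ z) (𝓝[>] 0) (𝓝 0) := by
    simpa only [Measure.restrict_restrict measurableSet_ball] using
      hg₂.tendsto_setIntegral_nhds_zero hsmall
  have hbound : Tendsto (fun ε => c * ((∫ z in S \ ball x ε, g₂ z) + ∫ z in S, g₃ z))
      (𝓝[>] 0) (𝓝 (c * ((∫ z in S, g₂ z) + ∫ z in S, g₃ z))) := by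
    have hsplit (ε : ℝ) :
        ∫ z in S \ ball x ε, g₂ z = (∫ z in S, g₂ z) - ∫ z in ball x ε ∩ S, g₂ z := by
      rw [inter_comm]
      linarith [integral_inter_add_sdiff (measurableSet_ball (x := x) (ε := ε)) hg₂]
    simp only [hsplit]
    simpa using (((tendsto_const_nhds (x := ∫ z in S, g₂ z)).sub hnear).add_const
      (∫ z in S, g₃ z)).const_mul c
  have hle := le_of_tendsto_of_tendsto hL hbound <| by
    filter_upwards [Ioo_mem_nhdsGT (sub_pos.2 hx)] with ε hε
    exact mul_le_mul_of_nonneg_left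
      (integral_truncation_le_of_isMinOn hw hσ hanti hmin hε.1 hε.2) hc
  rw [hsum] at hle
  linarith

end FracLapAtMinimum

lemma IsMinOn.of_nonneg_sdiff {α : Type*} {f : α → ℝ} {s t : Set α} {a : α}
    (hmin : IsMinOn f s a) (ha : f a ≤ 0) (hnonneg : ∀ z ∈ t \ s, 0 ≤ f z) : IsMinOn f t a :=
  isMinOn_iff.2 fun z hz => by
    by_cases hzs : z ∈ s
    · exact hmin hzs
    · linarith [hnonneg z ⟨hz, hzs⟩]

lemma norm_rpow_le_of_isMinOn_halfSpace {n : ℕ} [NeZero n] {l β c L A m : ℝ} {w : En n → ℝ}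
    (hβ : 0 < β) (hc : 0 < c) (hw : MemL n β w) (hanti : ∀ x, w (reflPt n l x) = -w x)
    {x : En n} (hx : x ∈ halfSpace n l) (hl : |l| ≤ ‖x‖) (hmin : IsMinOn w (halfSpace n l) x)
    (hwx : w x < 0) (hL : HasFracLap n β c w x L) (hLlow : -(A / ‖x‖ ^ m) ≤ L) :
    ‖x‖ ^ (m - β) ≤
      A / (2 * c * ((volume (ball (0 : En n) 1)).toReal / 7 ^ ((n : ℝ) + β)) * -w x) := by
  set κ := (volume (ball (0 : En n) 1)).toReal / 7 ^ ((n : ℝ) + β)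
  set r := ‖x‖
  have hr := norm_pos_of_mem_halfSpace hx hl
  have hκ : 0 < κ := div_pos (ENNReal.toReal_pos (measure_ball_pos _ _ one_pos).ne'
    measure_ball_lt_top.ne) (by positivity)
  have hup := hL.le_of_isMinOn_halfSpace hβ hc.le hw hanti hx hmin
  have hJ := le_integral_halfSpace_one_div_dist_reflPt_rpow hβ hx hl
  have hkey : 2 * c * κ * -w x * r ^ (-β) ≤ A / r ^ m := by
    nlinarith [mul_le_mul_of_nonpos_left hJ (by nlinarith : 2 * c * w x ≤ 0)]
  have hpos : 0 < 2 * c * κ * -w x := by have := neg_pos.2 hwx; positivity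
  rw [Real.rpow_neg hr.le, ← div_eq_mul_inv, div_le_div_iff₀ (by positivity) (by positivity)]
    at hkey
  rw [le_div_iff₀ hpos, Real.rpow_sub hr, div_mul_eq_mul_div, div_le_iff₀ (by positivity)]
  linarith

theorem statement1_general
    (n : ℕ) [NeZero n]
    (β : ℝ) (hβ : 0 < β ∧ β < 2)
    (lam : ℝ) (cβ : ℝ) (hcβ : 0 < cβ)
    (Ω : Set (En n)) (hΩsub : Ω ⊆ halfSpace n lam)
    (U V : En n → ℝ)
    (hV_L : MemL n β V)
    (hV_anti : ∀ x, V (reflPt n lam x) = -V x)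
    (C₁ C₂ C₃ : En n → ℝ)
    (hineq_V : ∀ x ∈ Ω, ∃ L, HasFracLap n β cβ V x L ∧ 0 ≤ L + C₁ x * U x)
    (hext : ∀ x ∈ halfSpace n lam \ Ω, 0 ≤ U x ∧ 0 ≤ V x)
    (hsign : ∀ x ∈ Ω, C₁ x < 0 ∧ C₃ x < 0 ∧ 0 < C₂ x)
    (m c c' R₁ : ℝ) (hm : β < m) (hc' : 0 < c')
    (hC₁decay : ∀ x : En n, R₁ ≤ ‖x‖ →
      c / ‖x‖ ^ m ≤ -C₁ x ∧ -C₁ x ≤ c' / ‖x‖ ^ m) :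
    ∃ R₀ > 0, ∀ x0 ∈ Ω, ∀ x1 ∈ Ω,
      (∀ x ∈ Ω, U x0 ≤ U x) → U x0 < 0 →
      (∀ x ∈ Ω, V x1 ≤ V x) → V x1 < 0 →
      ‖x0‖ ≤ R₀ ∨ ‖x1‖ ≤ R₀ := by
  by_cases hex : ∃ x0 ∈ Ω, ∃ x1 ∈ Ω,
      (∀ x ∈ Ω, U x0 ≤ U x) ∧ U x0 < 0 ∧ (∀ x ∈ Ω, V x1 ≤ V x) ∧ V x1 < 0
  swap
  · exact ⟨1, one_pos, fun x0 hx0 x1 hx1 hU0 hU0neg hV1 hV1neg =>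
      (hex ⟨x0, hx0, x1, hx1, hU0, hU0neg, hV1, hV1neg⟩).elim⟩
  -- the minimum values `U w₀`, `V w₁` are shared by all minimizers, so `R₀` may depend on them
  obtain ⟨w₀, hw₀, w₁, hw₁, hUw₀, hUw₀neg, hVw₁, hVw₁neg⟩ := hex
  set κ := (volume (ball (0 : En n) 1)).toReal / 7 ^ ((n : ℝ) + β)
  set R := (c' * -U w₀ / (2 * cβ * κ * -V w₁)) ^ (m - β)⁻¹
  refine ⟨max 1 (max |lam| (max R₁ R)), by positivity, fun x0 _ x1 hx1 _ _ hV1 hV1neg => ?_⟩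
  right
  by_contra! hfar
  simp only [max_lt_iff] at hfar
  have hVeq : V x1 = V w₁ := le_antisymm (hV1 w₁ hw₁) (hVw₁ x1 hx1)
  have hmin : IsMinOn V (halfSpace n lam) x1 :=
    (isMinOn_iff.2 hV1).of_nonneg_sdiff hV1neg.le fun z hz => (hext z hz).2
  obtain ⟨L, hL, hLV⟩ := hineq_V x1 hx1
  have hLlow : -(c' * -U w₀ / ‖x1‖ ^ m) ≤ L := by
    rw [← div_mul_eq_mul_div]
    nlinarith [mul_le_mul_of_nonpos_left (hUw₀ x1 hx1) (hsign x1 hx1).1.le,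
      mul_le_mul_of_nonneg_right (hC₁decay x1 hfar.2.2.1.le).2 (neg_nonneg.2 hUw₀neg.le)]
  have hdecay := norm_rpow_le_of_isMinOn_halfSpace hβ.1 hcβ hV_L hV_anti (hΩsub hx1)
    hfar.2.1.le hmin (hVeq ▸ hVw₁neg) hL hLlow
  rw [hVeq] at hdecay
  have hbase : 0 ≤ c' * -U w₀ / (2 * cβ * κ * -V w₁) := by
    have := neg_pos.2 hUw₀neg; have := neg_pos.2 hVw₁neg; positivity
  have := (Real.rpow_inv_lt_iff_of_pos hbase (norm_nonneg x1) (sub_pos.2 hm)).1 hfar.2.2.2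
  linarith

/-- Theorem 1.2: decay at infinity. -/
theorem statement1
    (n : ℕ) [NeZero n] (hn : 2 ≤ n)
    (α β : ℝ) (hα : 0 < α ∧ α < 2) (hβ : 0 < β ∧ β < 2)
    (lam : ℝ) (cα cβ : ℝ) (hcα : 0 < cα) (hcβ : 0 < cβ)
    (Ω : Set (En n)) (hΩopen : IsOpen Ω) (hΩsub : Ω ⊆ halfSpace n lam)
    (hΩunb : ¬ IsBounded Ω)
    (U V : En n → ℝ)
    (hU_L : MemL n α U) (hU_reg : C11locOn n Ω U)
    (hV_L : MemL n β V) (hV_reg : C11locOn n Ω V)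
    (hU_lsc : LowerSemicontinuousOn U (closure Ω))
    (hV_lsc : LowerSemicontinuousOn V (closure Ω))
    (hU_anti : ∀ x, U (reflPt n lam x) = -U x)
    (hV_anti : ∀ x, V (reflPt n lam x) = -V x)
    (C₁ C₂ C₃ : En n → ℝ)
    (hineq_U : ∀ x ∈ Ω, ∃ L, HasFracLap n α cα U x L ∧
      0 ≤ L + C₂ x * U x + C₃ x * V x)
    (hineq_V : ∀ x ∈ Ω, ∃ L, HasFracLap n β cβ V x L ∧ 0 ≤ L + C₁ x * U x)
    (hext : ∀ x ∈ halfSpace n lam \ Ω, 0 ≤ U x ∧ 0 ≤ V x)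
    (hsign : ∀ x ∈ Ω, C₁ x < 0 ∧ C₃ x < 0 ∧ 0 < C₂ x)
    (m c c' R₁ : ℝ) (hm : β < m) (hc : 0 < c) (hc' : 0 < c')
    (hC₁decay : ∀ x : En n, R₁ ≤ ‖x‖ →
      c / ‖x‖ ^ m ≤ -C₁ x ∧ -C₁ x ≤ c' / ‖x‖ ^ m)
    (hC₃lim : Tendsto C₃ (comap (fun x : En n => ‖x‖) atTop) (nhds 0)) :
    ∃ R₀ > 0, ∀ x0 ∈ Ω, ∀ x1 ∈ Ω,
      (∀ x ∈ Ω, U x0 ≤ U x) → U x0 < 0 →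
      (∀ x ∈ Ω, V x1 ≤ V x) → V x1 < 0 →
      ‖x0‖ ≤ R₀ ∨ ‖x1‖ ≤ R₀ :=
  statement1_general n β hβ lam cβ hcβ Ω hΩsub U V hV_L hV_anti C₁ C₂ C₃ hineq_V hext hsign m c c'
    R₁ hm hc' hC₁decay
end
end

section
/- Let n ≥ 2, 0 < σ < 2, λ ∈ ℝ, and let x̄ ∈ Σ_λ with x̄ ≠ 0 and 2|x̄| + x̄₁ > λ (which holds in particular when |x̄| is sufficiently large for fixed λ). Then the ball of radius |x̄| centered at x² = (3|x̄| + x̄₁, x̄') is contained in the half-space {y : y₁ > λ}, and ∫_{{y : y₁ > λ}} |x̄ - y|^{-(n+σ)} dy ≥ ω_n · 4^{-(n+σ)} · |x̄|^{-σ}, where ω_n denotes the volume of the unit ball in ℝⁿ. -/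
open MeasureTheory Filter Metric Set Bornology

noncomputable section

/-- The auxiliary point `x² = (3|x̄| + x̄₁, x̄')`. -/
def auxPt (n : ℕ) [NeZero n] (x : En n) : En n :=
  WithLp.toLp 2 (fun i => if i = 0 then 3 * ‖x‖ + x 0 else x i)

/-! On the ball `B` of radius `|x̄|` around `x²` the distance to `x̄` is at most
`3|x̄| + |x̄| = 4|x̄|`, so the kernel is at least `(4|x̄|)^{-(n+σ)}` there, while
`|B| = ω_n |x̄|ⁿ`; the condition `2|x̄| + x̄₁ > λ` is exactly what puts `B` inside
`{y₁ > λ}`.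
The integral over the half-space is finite because the half-space stays at distance
`λ - x̄₁ > 0` from `x̄` and the kernel decays like `|y|^{-(n+σ)}` with `n + σ > n`. -/

theorem integrableOn_compl_ball_one_div_dist_rpow {E : Type*} [NormedAddCommGroup E]
    [NormedSpace ℝ E] [FiniteDimensional ℝ E] [MeasurableSpace E] [BorelSpace E]
    (μ : Measure E) [μ.IsAddHaarMeasure] (x : E) {δ r : ℝ} (hδ : 0 < δ)
    (hr : (Module.finrank ℝ E : ℝ) < r) :
    IntegrableOn (fun y => 1 / dist x y ^ r) (ball x δ)ᶜ μ := by
  have hr0 : 0 < r := (Nat.cast_nonneg _).trans_lt hr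
  set C := (1 + δ) / δ
  have hmajor : Integrable (fun y => C ^ r * (1 + ‖y - x‖) ^ (-r)) μ :=
    ((integrable_one_add_norm hr).comp_sub_right x).const_mul _
  have hmeas : Measurable fun y => 1 / dist x y ^ r := by fun_prop
  refine hmajor.integrableOn.mono' hmeas.aestronglyMeasurable ?_
  filter_upwards [ae_restrict_mem isOpen_ball.measurableSet.compl] with y hy
  have hδy : δ ≤ dist x y := by simpa [dist_comm] using hy
  have hpos : 0 < dist x y := hδ.trans_le hδy
  have hdist : 1 + dist x y ≤ C * dist x y := by
    rw [div_mul_eq_mul_div, le_div_iff₀ hδ]; nlinarith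
  rw [Real.norm_of_nonneg (by positivity), ← dist_eq_norm, dist_comm y]
  calc 1 / dist x y ^ r = C ^ r / (C * dist x y) ^ r := by
        rw [Real.mul_rpow (by positivity) hpos.le, div_mul_cancel_left₀ (by positivity),
          one_div]
    _ ≤ C ^ r / (1 + dist x y) ^ r := by gcongr
    _ = C ^ r * (1 + dist x y) ^ (-r) := by
        rw [Real.rpow_neg (by positivity), div_eq_mul_inv]

theorem mul_measureReal_ball_le_setIntegral_one_div_dist_rpow {X : Type*}
    [PseudoMetricSpace X] [MeasurableSpace X] [OpensMeasurableSpace X] {μ : Measure X}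
    {x c : X} {ρ r : ℝ} (hr : 0 ≤ r) (hρ : ρ ≤ dist x c) (hμ : μ (ball c ρ) ≠ ⊤)
    (hint : IntegrableOn (fun y => 1 / dist x y ^ r) (ball c ρ) μ) :
    1 / (dist x c + ρ) ^ r * μ.real (ball c ρ) ≤
      ∫ y in ball c ρ, 1 / dist x y ^ r ∂μ := by
  refine setIntegral_ge_of_const_le_real measurableSet_ball hμ (fun y hy => ?_) hint
  rw [mem_ball'] at hy
  have hpos : 0 < dist x y := by linarith [dist_triangle x y c, dist_comm c y]
  have hle : dist x y ≤ dist x c + ρ := by linarith [dist_triangle x c y]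
  exact one_div_le_one_div_of_le (by positivity) (Real.rpow_le_rpow hpos.le hle hr)

theorem auxPt_eq_add (n : ℕ) [NeZero n] (x : En n) :
    auxPt n x = x + (3 * ‖x‖) • EuclideanSpace.single 0 1 := by
  ext i
  by_cases hi : i = 0 <;> simp [auxPt, hi, add_comm]

theorem dist_auxPt (n : ℕ) [NeZero n] (x : En n) : dist x (auxPt n x) = 3 * ‖x‖ := by
  rw [auxPt_eq_add, dist_self_add_right, norm_smul, PiLp.norm_single]
  simp

theorem ball_auxPt_subset_setOf_lt {n : ℕ} [NeZero n] {x : En n} {l : ℝ}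
    (hl : l < 2 * ‖x‖ + x 0) : ball (auxPt n x) ‖x‖ ⊆ {y | l < y 0} := by
  intro y hy
  have h0 := (PiLp.dist_apply_le y (auxPt n x) 0).trans_lt hy
  rw [Real.dist_eq, abs_sub_lt_iff] at h0
  have hx0 : auxPt n x 0 = 3 * ‖x‖ + x 0 := by simp [auxPt]
  show l < y 0
  linarith

theorem setOf_lt_apply_subset_compl_ball {n : ℕ} [NeZero n] (x : En n) (l : ℝ) :
    {y : En n | l < y 0} ⊆ (ball x (l - x 0))ᶜ := by
  intro y (hy : l < y 0) hball
  have h0 := (PiLp.dist_apply_le x y 0).trans_lt (mem_ball'.1 hball)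
  rw [Real.dist_eq, abs_sub_lt_iff] at h0
  linarith

theorem statement6_general
    (n : ℕ) [NeZero n]
    (σ : ℝ) (hσ : 0 < σ ∧ σ < 2) (lam : ℝ)
    (xb : En n) (hxb : xb ∈ halfSpace n lam) (hxb0 : xb ≠ 0)
    (hfar : lam < 2 * ‖xb‖ + xb 0) :
    ball (auxPt n xb) ‖xb‖ ⊆ {y : En n | lam < y 0} ∧
    (volume (ball (0 : En n) 1)).toReal * (4 : ℝ) ^ (-((n : ℝ) + σ)) *
        ‖xb‖ ^ (-σ) ≤
      ∫ y in {y : En n | lam < y 0}, 1 / dist xb y ^ ((n : ℝ) + σ) := by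
  have hρ : 0 < ‖xb‖ := norm_pos_iff.2 hxb0
  have hball := ball_auxPt_subset_setOf_lt hfar
  have hint : IntegrableOn (fun y => 1 / dist xb y ^ ((n : ℝ) + σ)) {y : En n | lam < y 0} :=
    (integrableOn_compl_ball_one_div_dist_rpow volume xb (sub_pos.2 hxb)
      (by simpa using hσ.1)).mono_set (setOf_lt_apply_subset_compl_ball xb lam)
  refine ⟨hball, ?_⟩
  calc (volume (ball (0 : En n) 1)).toReal * (4 : ℝ) ^ (-((n : ℝ) + σ)) * ‖xb‖ ^ (-σ)
      = 1 / (dist xb (auxPt n xb) + ‖xb‖) ^ ((n : ℝ) + σ) *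
          volume.real (ball (auxPt n xb) ‖xb‖) := by
        rw [dist_auxPt, ← Measure.addHaar_real_closedBall_eq_addHaar_real_ball,
          Measure.addHaar_real_closedBall _ _ hρ.le, finrank_euclideanSpace_fin,
          show 3 * ‖xb‖ + ‖xb‖ = 4 * ‖xb‖ by ring, Real.mul_rpow (by norm_num) hρ.le,
          Real.rpow_neg (by norm_num), Real.rpow_neg hρ.le, Real.rpow_add hρ, Real.rpow_natCast,
          measureReal_def]
        field_simp
    _ ≤ ∫ y in ball (auxPt n xb) ‖xb‖, 1 / dist xb y ^ ((n : ℝ) + σ) :=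
        mul_measureReal_ball_le_setIntegral_one_div_dist_rpow
          (by linarith [hσ.1, (n.cast_nonneg : (0 : ℝ) ≤ n)])
          (by rw [dist_auxPt]; linarith) measure_ball_lt_top.ne (hint.mono_set hball)
    _ ≤ ∫ y in {y : En n | lam < y 0}, 1 / dist xb y ^ ((n : ℝ) + σ) :=
        setIntegral_mono_set hint (.of_forall fun y => by positivity) hball.eventuallyLE

/-- the geometric lower bound (2.2)/(d-2) used in the proof
of decay at infinity. `ω_n` is the volume of the unit ball of `ℝⁿ`. -/
theorem statement6
    (n : ℕ) [NeZero n] (hn : 2 ≤ n)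
    (σ : ℝ) (hσ : 0 < σ ∧ σ < 2) (lam : ℝ)
    (xb : En n) (hxb : xb ∈ halfSpace n lam) (hxb0 : xb ≠ 0)
    (hfar : lam < 2 * ‖xb‖ + xb 0) :
    ball (auxPt n xb) ‖xb‖ ⊆ {y : En n | lam < y 0} ∧
    (volume (ball (0 : En n) 1)).toReal * (4 : ℝ) ^ (-((n : ℝ) + σ)) *
        ‖xb‖ ^ (-σ) ≤
      ∫ y in {y : En n | lam < y 0}, 1 / dist xb y ^ ((n : ℝ) + σ) :=
  statement6_general n σ hσ lam xb hxb hxb0 hfar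
end
end
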